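/- arXiv:1308.1138 — 3 statements merged into one kernel-verified Lean document; each statement's English description precedes it below -/
import Mathlib

section
/- For sums of scaled unit types, Σ_{i=1}^n α_i·U_i ≡ Σ_{j=1}^m β_j·V_j holds if and only if Σ_{i=1}^n α_i·(∀X.U_i) ≡ Σ_{j=1}^m β_j·(∀X.V_j) holds. -/
/-!
Formalization of the vectorial λ-calculus (Arrighi, Díaz-Caro, Valiron):
syntax of types and terms, type equivalence, typing rules, reduction, etc.
-/

universe u

/-- Types of λ^vec. Type variables come in two kinds, tagged by a `Bool`:
`true` for unit type variables 𝕌, `false` for general type variables 𝕏.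
`fa b n U` is ∀X.U where X is the variable of kind `b` with index `n`. -/
inductive VType (S : Type u) : Type u where
  | uvar : ℕ → VType S
  | gvar : ℕ → VType S
  | arrow : VType S → VType S → VType S
  | fa : Bool → ℕ → VType S → VType S
  | smul : S → VType S → VType S
  | add : VType S → VType S → VType S

namespace VType

variable {S : Type u}

/-- Unit types: U ::= 𝕌 | U → T | ∀𝕌.U | ∀𝕏.U -/
inductive IsUnit : VType S → Prop where
  | uvar (n : ℕ) : IsUnit (uvar n)
  | arrow {U T : VType S} : IsUnit U → IsUnit (arrow U T)
  | fa {b : Bool} {n : ℕ} {U : VType S} : IsUnit U → IsUnit (fa b n U)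

/-- 𝒰 ::= U | 𝕏 : a unit type or a general type variable. -/
def IsUG (T : VType S) : Prop := IsUnit T ∨ ∃ n, T = gvar n

/-- Free type variables (as kind-index pairs). -/
def freeTV : VType S → Set (Bool × ℕ)
  | uvar n => {(true, n)}
  | gvar n => {(false, n)}
  | arrow U T => freeTV U ∪ freeTV T
  | fa b n U => freeTV U \ {(b, n)}
  | smul _ T => freeTV T
  | add T R => freeTV T ∪ freeTV R

/-- Substitution of the type variable `v` by the type `A`;
it distributes homomorphically through `smul` and `add`. -/
def substT : VType S → (Bool × ℕ) → VType S → VType S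
  | uvar n, v, A => if v = (true, n) then A else uvar n
  | gvar n, v, A => if v = (false, n) then A else gvar n
  | arrow U T, v, A => arrow (substT U v A) (substT T v A)
  | fa b n U, v, A => if v = (b, n) then fa b n U else fa b n (substT U v A)
  | smul a T, v, A => smul a (substT T v A)
  | add T R, v, A => add (substT T v A) (substT R v A)

/-- The kind condition: a unit variable may only be substituted by a unit type. -/
def kindOK (v : Bool × ℕ) (A : VType S) : Prop := v.1 = true → IsUnit A

/-- ∀X⃗.T for a vector of variables. -/
def faMany (Xs : List (Bool × ℕ)) (T : VType S) : VType S :=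
  Xs.foldr (fun v T => fa v.1 v.2 T) T

/-- T[A⃗/X⃗] for vectors of variables and types. -/
def substMany (T : VType S) (Xs : List (Bool × ℕ)) (As : List (VType S)) : VType S :=
  (Xs.zip As).foldl (fun T p => substT T p.1 p.2) T

/-- The linear combination Σᵢ αᵢ·Tᵢ of a list of scalar–type pairs.
(The value on the empty list is irrelevant junk; it is only used on
nonempty lists.) -/
def ssumL [CommRing S] : List (S × VType S) → VType S
  | [] => smul 0 (uvar 0)
  | [p] => smul p.1 p.2
  | p :: l => add (smul p.1 p.2) (ssumL l)

end VType

/-- Equivalence of types: the smallest congruence satisfying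
1·T ≡ T, α·(β·T) ≡ (α×β)·T, α·T + α·R ≡ α·(T+R), α·T + β·T ≡ (α+β)·T,
commutativity and associativity of +. -/
inductive TEq {S : Type u} [CommRing S] : VType S → VType S → Prop where
  | refl (T : VType S) : TEq T T
  | symm {T R : VType S} : TEq T R → TEq R T
  | trans {T R Q : VType S} : TEq T R → TEq R Q → TEq T Q
  | oneSmul (T : VType S) : TEq (VType.smul 1 T) T
  | smulSmul (a b : S) (T : VType S) :
      TEq (VType.smul a (VType.smul b T)) (VType.smul (a * b) T)
  | smulAdd (a : S) (T R : VType S) :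
      TEq (VType.add (VType.smul a T) (VType.smul a R)) (VType.smul a (VType.add T R))
  | addSmul (a b : S) (T : VType S) :
      TEq (VType.add (VType.smul a T) (VType.smul b T)) (VType.smul (a + b) T)
  | comm (T R : VType S) : TEq (VType.add T R) (VType.add R T)
  | assoc (T R Q : VType S) :
      TEq (VType.add T (VType.add R Q)) (VType.add (VType.add T R) Q)
  | arrowCong {U V T R : VType S} : TEq U V → TEq T R → TEq (VType.arrow U T) (VType.arrow V R)
  | faCong (b : Bool) (n : ℕ) {T R : VType S} : TEq T R → TEq (VType.fa b n T) (VType.fa b n R)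
  | smulCong (a : S) {T R : VType S} : TEq T R → TEq (VType.smul a T) (VType.smul a R)
  | addCong {T T' R R' : VType S} :
      TEq T T' → TEq R R' → TEq (VType.add T R) (VType.add T' R')

/-- Terms of λ^vec. -/
inductive VTerm (S : Type u) : Type u where
  | var : ℕ → VTerm S
  | lam : ℕ → VTerm S → VTerm S
  | app : VTerm S → VTerm S → VTerm S
  | zero : VTerm S
  | smul : S → VTerm S → VTerm S
  | add : VTerm S → VTerm S → VTerm S

namespace VTerm

variable {S : Type u}

/-- Basis terms: variables and λ-abstractions. -/
def IsBasis : VTerm S → Prop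
  | var _ => True
  | lam _ _ => True
  | _ => False

/-- Free term variables. -/
def freeV : VTerm S → Set ℕ
  | var x => {x}
  | lam x t => freeV t \ {x}
  | app t r => freeV t ∪ freeV r
  | zero => ∅
  | smul _ t => freeV t
  | add t r => freeV t ∪ freeV r

def ClosedTerm (t : VTerm S) : Prop := freeV t = ∅

/-- Capture-avoiding substitution of the basis term `b` for the variable `x`;
it distributes homomorphically through linear combinations. -/
def substV : VTerm S → ℕ → VTerm S → VTerm S
  | var y, x, b => if y = x then b else var y
  | lam y t, x, b => if y = x then lam y t else lam y (substV t x b)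
  | app t r, x, b => app (substV t x b) (substV r x b)
  | zero, _, _ => zero
  | smul a t, x, b => smul a (substV t x b)
  | add t r, x, b => add (substV t x b) (substV r x b)

end VTerm

/-- Typing contexts: partial assignments of (unit) types to term variables. -/
def Ctx (S : Type u) := ℕ → Option (VType S)

def Ctx.extend {S : Type u} (Γ : Ctx S) (x : ℕ) (U : VType S) : Ctx S :=
  fun y => if y = x then some U else Γ y

/-- Free type variables of a context. -/
def Ctx.freeTV {S : Type u} (Γ : Ctx S) : Set (Bool × ℕ) :=
  {v | ∃ x U, Γ x = some U ∧ v ∈ VType.freeTV U}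

/-- Type substitution applied pointwise to a context. -/
def Ctx.substT {S : Type u} (Γ : Ctx S) (v : Bool × ℕ) (A : VType S) : Ctx S :=
  fun x => (Γ x).map (fun U => VType.substT U v A)

/-- The typing rules of the vectorial type system:
(ax), (0_I), (→_I), (→_E), (∀_I), (∀_E), (α_I), (+_I), (≡). -/
inductive Typing {S : Type u} [CommRing S] : Ctx S → VTerm S → VType S → Prop where
  | ax {Γ : Ctx S} {x : ℕ} {U : VType S} :
      Γ x = some U → VType.IsUnit U → Typing Γ (VTerm.var x) U
  | zeroI {Γ : Ctx S} {t : VTerm S} {T : VType S} :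
      Typing Γ t T → Typing Γ VTerm.zero (VType.smul 0 T)
  | arrI {Γ : Ctx S} {x : ℕ} {U : VType S} {t : VTerm S} {T : VType S} :
      VType.IsUnit U → Typing (Γ.extend x U) t T →
      Typing Γ (VTerm.lam x t) (VType.arrow U T)
  | arrE {Γ : Ctx S} {t r : VTerm S} (U : VType S) (Xs : List (Bool × ℕ))
      (p : S × VType S) (ps : List (S × VType S))
      (q : S × List (VType S)) (qs : List (S × List (VType S))) :
      VType.IsUnit U →
      (∀ w ∈ q :: qs, w.2.length = Xs.length ∧
        ∀ pr ∈ Xs.zip w.2, VType.kindOK pr.1 pr.2) →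
      Typing Γ t (VType.ssumL ((p :: ps).map
        (fun pi => (pi.1, VType.faMany Xs (VType.arrow U pi.2))))) →
      Typing Γ r (VType.ssumL ((q :: qs).map
        (fun qj => (qj.1, VType.substMany U Xs qj.2)))) →
      Typing Γ (VTerm.app t r)
        (VType.ssumL ((p :: ps).flatMap (fun pi => (q :: qs).map
          (fun qj => (pi.1 * qj.1, VType.substMany pi.2 Xs qj.2)))))
  | faI {Γ : Ctx S} {t : VTerm S} (v : Bool × ℕ)
      (p : S × VType S) (ps : List (S × VType S)) :
      v ∉ Γ.freeTV →
      (∀ w ∈ p :: ps, VType.IsUnit w.2) →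
      Typing Γ t (VType.ssumL (p :: ps)) →
      Typing Γ t (VType.ssumL ((p :: ps).map (fun w => (w.1, VType.fa v.1 v.2 w.2))))
  | faE {Γ : Ctx S} {t : VTerm S} (v : Bool × ℕ) (A : VType S)
      (p : S × VType S) (ps : List (S × VType S)) :
      VType.kindOK v A →
      (∀ w ∈ p :: ps, VType.IsUnit w.2) →
      Typing Γ t (VType.ssumL ((p :: ps).map (fun w => (w.1, VType.fa v.1 v.2 w.2)))) →
      Typing Γ t (VType.ssumL ((p :: ps).map (fun w => (w.1, VType.substT w.2 v A))))
  | smulI {Γ : Ctx S} {t : VTerm S} {T : VType S} (a : S) :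
      Typing Γ t T → Typing Γ (VTerm.smul a t) (VType.smul a T)
  | addI {Γ : Ctx S} {t r : VTerm S} {T R : VType S} :
      Typing Γ t T → Typing Γ r R → Typing Γ (VTerm.add t r) (VType.add T R)
  | equiv {Γ : Ctx S} {t : VTerm S} {T R : VType S} :
      Typing Γ t T → TEq T R → Typing Γ t R

/-- AC equivalence of terms (associativity and commutativity of +,
as a congruence). -/
inductive ACEq {S : Type u} : VTerm S → VTerm S → Prop where
  | refl (t : VTerm S) : ACEq t t
  | symm {t r : VTerm S} : ACEq t r → ACEq r t
  | trans {t r u : VTerm S} : ACEq t r → ACEq r u → ACEq t u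
  | comm (t r : VTerm S) : ACEq (VTerm.add t r) (VTerm.add r t)
  | assoc (t r u : VTerm S) :
      ACEq (VTerm.add t (VTerm.add r u)) (VTerm.add (VTerm.add t r) u)
  | lamCong (x : ℕ) {t r : VTerm S} : ACEq t r → ACEq (VTerm.lam x t) (VTerm.lam x r)
  | appCong {t t' r r' : VTerm S} :
      ACEq t t' → ACEq r r' → ACEq (VTerm.app t r) (VTerm.app t' r')
  | smulCong (a : S) {t r : VTerm S} : ACEq t r → ACEq (VTerm.smul a t) (VTerm.smul a r)
  | addCong {t t' r r' : VTerm S} :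
      ACEq t t' → ACEq r r' → ACEq (VTerm.add t r) (VTerm.add t' r')

/-- One-step reduction of λ^vec, labelled by a `Bool` which is `true`
exactly when the underlying rule is a factorisation rule (Group F).
Reduction acts modulo AC of +, and is closed under contexts. -/
inductive Red {S : Type u} [CommRing S] : Bool → VTerm S → VTerm S → Prop where
  -- Group E
  | zeroSmul (t : VTerm S) : Red false (VTerm.smul 0 t) VTerm.zero
  | oneSmul (t : VTerm S) : Red false (VTerm.smul 1 t) t
  | smulZero (a : S) : Red false (VTerm.smul a VTerm.zero) VTerm.zero
  | smulSmul (a b : S) (t : VTerm S) :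
      Red false (VTerm.smul a (VTerm.smul b t)) (VTerm.smul (a * b) t)
  | smulAdd (a : S) (t r : VTerm S) :
      Red false (VTerm.smul a (VTerm.add t r)) (VTerm.add (VTerm.smul a t) (VTerm.smul a r))
  -- Group F
  | factor (a b : S) (t : VTerm S) :
      Red true (VTerm.add (VTerm.smul a t) (VTerm.smul b t)) (VTerm.smul (a + b) t)
  | factor1 (a : S) (t : VTerm S) :
      Red true (VTerm.add (VTerm.smul a t) t) (VTerm.smul (a + 1) t)
  | factor2 (t : VTerm S) : Red true (VTerm.add t t) (VTerm.smul (1 + 1) t)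
  | addZero (t : VTerm S) : Red true (VTerm.add t VTerm.zero) t
  -- Group B
  | beta (x : ℕ) (t b : VTerm S) :
      VTerm.IsBasis b → Red false (VTerm.app (VTerm.lam x t) b) (VTerm.substV t x b)
  -- Group A
  | appAddL (t r u : VTerm S) :
      Red false (VTerm.app (VTerm.add t r) u) (VTerm.add (VTerm.app t u) (VTerm.app r u))
  | appAddR (t r u : VTerm S) :
      Red false (VTerm.app t (VTerm.add r u)) (VTerm.add (VTerm.app t r) (VTerm.app t u))
  | appSmulL (a : S) (t r : VTerm S) :
      Red false (VTerm.app (VTerm.smul a t) r) (VTerm.smul a (VTerm.app t r))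
  | appSmulR (a : S) (t r : VTerm S) :
      Red false (VTerm.app t (VTerm.smul a r)) (VTerm.smul a (VTerm.app t r))
  | appZeroL (t : VTerm S) : Red false (VTerm.app VTerm.zero t) VTerm.zero
  | appZeroR (t : VTerm S) : Red false (VTerm.app t VTerm.zero) VTerm.zero
  -- contextual rules
  | smulCtx {f : Bool} {t r : VTerm S} (a : S) :
      Red f t r → Red f (VTerm.smul a t) (VTerm.smul a r)
  | addCtx {f : Bool} {t r : VTerm S} (u : VTerm S) :
      Red f t r → Red f (VTerm.add u t) (VTerm.add u r)
  | appCtxR {f : Bool} {t r : VTerm S} (u : VTerm S) :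
      Red f t r → Red f (VTerm.app u t) (VTerm.app u r)
  | appCtxL {f : Bool} {t r : VTerm S} (u : VTerm S) :
      Red f t r → Red f (VTerm.app t u) (VTerm.app r u)
  | lamCtx {f : Bool} {t r : VTerm S} (x : ℕ) :
      Red f t r → Red f (VTerm.lam x t) (VTerm.lam x r)
  -- reduction modulo AC of +
  | ac {f : Bool} {t t' r r' : VTerm S} :
      ACEq t t' → Red f t' r' → ACEq r' r → Red f t r

/-- One-step reduction (by any rule). -/
def Red1 {S : Type u} [CommRing S] (t r : VTerm S) : Prop := ∃ f, Red f t r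

/-- Strong normalisation: every reduction sequence from `t` is finite. -/
def SN {S : Type u} [CommRing S] (t : VTerm S) : Prop :=
  Acc (fun a b : VTerm S => Red1 b a) t

/-- Algebraic contexts F(t⃗) ::= tᵢ | F(t⃗)+G(t⃗) | α·F(t⃗) | 0. -/
inductive AlgCtx (S : Type u) : Type u where
  | idx : ℕ → AlgCtx S
  | add : AlgCtx S → AlgCtx S → AlgCtx S
  | smul : S → AlgCtx S → AlgCtx S
  | zero : AlgCtx S

/-- Filling an algebraic context with a list of terms. -/
def AlgCtx.fill {S : Type u} : AlgCtx S → List (VTerm S) → VTerm S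
  | .idx i, ts => ts.getD i VTerm.zero
  | .add F G, ts => VTerm.add (F.fill ts) (G.fill ts)
  | .smul a F, ts => VTerm.smul a (F.fill ts)
  | .zero, _ => VTerm.zero

/-- `t` is not a λ-abstraction. -/
def NotLam {S : Type u} : VTerm S → Prop
  | VTerm.lam _ _ => False
  | _ => True

/-- Closed neutral terms: closed, not an abstraction, and reducing to something. -/
def Neutral {S : Type u} [CommRing S] (t : VTerm S) : Prop :=
  VTerm.ClosedTerm t ∧ NotLam t ∧ ∃ r, Red1 t r

/-- Reducibility candidates: sets of closed terms satisfying RC1–RC4. -/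
def IsRC {S : Type u} [CommRing S] (A : Set (VTerm S)) : Prop :=
  (∀ t ∈ A, VTerm.ClosedTerm t ∧ SN t) ∧
  (∀ t ∈ A, ∀ r, Red1 t r → r ∈ A) ∧
  (∀ t, Neutral t → (∀ r, Red1 t r → r ∈ A) → t ∈ A) ∧
  VTerm.zero ∈ A

/-- The arrow operation on candidates: closure under RC3 and RC4 of the set of
closed `t` with (t)0 ∈ B and (t)b ∈ B for every basis term b ∈ A. -/
inductive arrowSet {S : Type u} [CommRing S] (A B : Set (VTerm S)) : VTerm S → Prop where
  | base {t : VTerm S} : VTerm.ClosedTerm t → VTerm.app t VTerm.zero ∈ B →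
      (∀ b ∈ A, VTerm.IsBasis b → VTerm.app t b ∈ B) → arrowSet A B t
  | neutral {t : VTerm S} : Neutral t → (∀ r, Red1 t r → arrowSet A B r) → arrowSet A B t
  | zero : arrowSet A B VTerm.zero

/-- The sum Σᵢ 𝒜ᵢ of a family of candidates: closure under CC, RC2 and RC3
of the set of algebraic combinations F(t⃗) of terms each in some 𝒜ᵢ. -/
inductive sumSet {S : Type u} [CommRing S] {ι : Type*} (As : ι → Set (VTerm S)) :
    VTerm S → Prop where
  | base (F : AlgCtx S) (ts : List (VTerm S)) :
      (∀ t ∈ ts, ∃ i, t ∈ As i) → sumSet As (F.fill ts)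
  | red {t r : VTerm S} : sumSet As t → Red1 t r → sumSet As r
  | neutral {t : VTerm S} : Neutral t → (∀ r, Red1 t r → sumSet As r) → sumSet As t
  | cc (F : AlgCtx S) (ts : List (VTerm S)) {t : VTerm S} :
      sumSet As (F.fill ts) → t ∈ ts → sumSet As t

/-- The order ⊒ on types (`TGe T R` means T ⊒ R): the smallest reflexive,
transitive, congruent relation with (α+β)·T ⊒ α·T + β·T' whenever some term
can be typed with both α·T and β·T', and T ⊒ T + 0·R. -/
inductive TGe {S : Type u} [CommRing S] : VType S → VType S → Prop where
  | refl (T : VType S) : TGe T T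
  | trans {T R Q : VType S} : TGe T R → TGe R Q → TGe T Q
  | factor {Γ : Ctx S} {t : VTerm S} {a b : S} {T T' : VType S} :
      Typing Γ (VTerm.smul a t) (VType.smul a T) →
      Typing Γ (VTerm.smul b t) (VType.smul b T') →
      TGe (VType.smul (a + b) T) (VType.add (VType.smul a T) (VType.smul b T'))
  | addZero (T R : VType S) : TGe T (VType.add T (VType.smul 0 R))
  | addCong (Q : VType S) {T R : VType S} : TGe T R → TGe (VType.add T Q) (VType.add R Q)
  | smulCong (a : S) {T R : VType S} : TGe T R → TGe (VType.smul a T) (VType.smul a R)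
  | arrowCong (U : VType S) {T R : VType S} :
      TGe T R → TGe (VType.arrow U T) (VType.arrow U R)
  | faCong (b : Bool) (n : ℕ) {T R : VType S} :
      TGe T R → TGe (VType.fa b n T) (VType.fa b n R)

/-- The single-variable relation T ≻^t_{X,Γ} R of Definition 4.3. -/
inductive StepOrd {S : Type u} [CommRing S] (Γ : Ctx S) (t : VTerm S) (X : Bool × ℕ) :
    VType S → VType S → Prop where
  | faI {T R : VType S} (l : List (S × VType S)) :
      l ≠ [] → (∀ p ∈ l, VType.IsUnit p.2) →
      X ∉ Γ.freeTV → Typing Γ t T → Typing Γ t R →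
      TEq T (VType.ssumL l) →
      TEq R (VType.ssumL (l.map (fun p => (p.1, VType.fa X.1 X.2 p.2)))) →
      StepOrd Γ t X T R
  | faE {T R : VType S} (l : List (S × VType S)) (A : VType S) :
      l ≠ [] → (∀ p ∈ l, VType.IsUnit p.2) → VType.kindOK X A →
      X ∉ Γ.freeTV → Typing Γ t T → Typing Γ t R →
      TEq T (VType.ssumL (l.map (fun p => (p.1, VType.fa X.1 X.2 p.2)))) →
      TEq R (VType.ssumL (l.map (fun p => (p.1, VType.substT p.2 X A)))) →
      StepOrd Γ t X T R

/-- The relation T ≽^t_{𝒱,Γ} R of Definition 4.3. -/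
inductive TOrd {S : Type u} [CommRing S] (Γ : Ctx S) (t : VTerm S) :
    Set (Bool × ℕ) → VType S → VType S → Prop where
  | step {X : Bool × ℕ} {T R : VType S} : StepOrd Γ t X T R → TOrd Γ t {X} T R
  | trans {V₁ V₂ : Set (Bool × ℕ)} {T R Q : VType S} :
      TOrd Γ t V₁ T R → TOrd Γ t V₂ R Q → TOrd Γ t (V₁ ∪ V₂) T Q
  | ofEq (V : Set (Bool × ℕ)) {T R : VType S} : TEq T R → TOrd Γ t V T R

/-- Inner sum Σⱼ βⱼ·bⱼ of terms, with the convention that the empty sum is 0. -/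
def tsumI {S : Type u} : List (S × VTerm S) → VTerm S
  | [] => VTerm.zero
  | [p] => VTerm.smul p.1 p.2
  | p :: l => VTerm.add (VTerm.smul p.1 p.2) (tsumI l)

/-- Outer sum of a list of terms. -/
def tsumO {S : Type u} : List (VTerm S) → VTerm S
  | [] => VTerm.zero
  | [t] => t
  | t :: l => VTerm.add t (tsumO l)

/-!
The rules of `≡` look inside a summand only through `·` and `+`; below that level they act
by congruence alone. So any map applied to the atoms of a type (its maximal subterms not
headed by `·` or `+`) that respects the congruence rules on atoms preserves `≡`. The atoms
of `Σᵢ αᵢ·Uᵢ` with unit `Uᵢ` are the `Uᵢ` themselves, so prefixing every atom with `∀X`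
proves one direction, and stripping a leading `∀X` from every atom proves the other.
-/

namespace VType

variable {S : Type u}

def mapAtoms (f : VType S → VType S) : VType S → VType S
  | smul a T => smul a (mapAtoms f T)
  | add T R => add (mapAtoms f T) (mapAtoms f R)
  | T => f T

def stripFa (X : Bool × ℕ) : VType S → VType S
  | fa b n U => if (b, n) = X then U else fa b n U
  | T => T

@[simp]
theorem stripFa_fa (X : Bool × ℕ) (U : VType S) : stripFa X (fa X.1 X.2 U) = U := by
  simp [stripFa]

theorem IsUnit.mapAtoms_eq {U : VType S} (hU : IsUnit U) (f : VType S → VType S) :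
    mapAtoms f U = f U := by
  cases hU <;> rfl

theorem mapAtoms_ssumL [CommRing S] (f : VType S → VType S) {l : List (S × VType S)}
    (hl : l ≠ []) (hatoms : ∀ p ∈ l, mapAtoms f p.2 = f p.2) :
    mapAtoms f (ssumL l) = ssumL (l.map fun p => (p.1, f p.2)) := by
  induction l with
  | nil => exact absurd rfl hl
  | cons p l ih =>
    have hp : mapAtoms f (smul p.1 p.2) = smul p.1 (f p.2) := by
      rw [mapAtoms, hatoms p List.mem_cons_self]
    cases l with
    | nil => exact hp
    | cons q l =>
      change add (mapAtoms f (smul p.1 p.2)) (mapAtoms f (ssumL (q :: l))) = _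
      rw [hp, ih (List.cons_ne_nil _ _) fun r hr => hatoms r (List.mem_cons_of_mem p hr)]
      rfl

end VType

namespace TEq

variable {S : Type u} [CommRing S]

theorem mapAtoms {f : VType S → VType S}
    (harrow : ∀ {U V T R : VType S}, TEq U V → TEq T R →
      TEq (f (VType.arrow U T)) (f (VType.arrow V R)))
    (hfa : ∀ (b : Bool) (n : ℕ) {T R : VType S}, TEq T R →
      TEq (f (VType.fa b n T)) (f (VType.fa b n R)))
    {T R : VType S} (h : TEq T R) : TEq (T.mapAtoms f) (R.mapAtoms f) := by
  induction h with
  | refl => exact .refl _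
  | symm _ ih => exact ih.symm
  | trans _ _ ih₁ ih₂ => exact ih₁.trans ih₂
  | oneSmul => exact .oneSmul _
  | smulSmul => exact .smulSmul _ _ _
  | smulAdd => exact .smulAdd _ _ _
  | addSmul => exact .addSmul _ _ _
  | comm => exact .comm _ _
  | assoc => exact .assoc _ _ _
  | arrowCong h₁ h₂ => exact harrow h₁ h₂
  | faCong b n h => exact hfa b n h
  | smulCong a _ ih => exact .smulCong a ih
  | addCong _ _ ih₁ ih₂ => exact .addCong ih₁ ih₂

theorem mapAtoms_fa (X : Bool × ℕ) {T R : VType S} (h : TEq T R) :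
    TEq (T.mapAtoms (VType.fa X.1 X.2)) (R.mapAtoms (VType.fa X.1 X.2)) :=
  h.mapAtoms (fun h₁ h₂ => .faCong _ _ (h₁.arrowCong h₂))
    fun b n _ _ h => .faCong _ _ (.faCong b n h)

theorem mapAtoms_stripFa (X : Bool × ℕ) {T R : VType S} (h : TEq T R) :
    TEq (T.mapAtoms (VType.stripFa X)) (R.mapAtoms (VType.stripFa X)) := by
  refine h.mapAtoms (fun h₁ h₂ => h₁.arrowCong h₂) fun b n T R h => ?_
  by_cases hX : (b, n) = X
  · simpa [VType.stripFa, hX] using h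
  · simpa [VType.stripFa, hX] using TEq.faCong b n h

end TEq

/-- Σᵢ αᵢ·Uᵢ ≡ Σⱼ βⱼ·Vⱼ iff Σᵢ αᵢ·∀X.Uᵢ ≡ Σⱼ βⱼ·∀X.Vⱼ. -/
theorem equiv_forall_iff {S : Type} [CommRing S] (X : Bool × ℕ)
    (l₁ l₂ : List (S × VType S)) (h₁ : l₁ ≠ []) (h₂ : l₂ ≠ [])
    (hu₁ : ∀ p ∈ l₁, VType.IsUnit p.2) (hu₂ : ∀ p ∈ l₂, VType.IsUnit p.2) :
    TEq (VType.ssumL l₁) (VType.ssumL l₂) ↔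
    TEq (VType.ssumL (l₁.map (fun p => (p.1, VType.fa X.1 X.2 p.2))))
        (VType.ssumL (l₂.map (fun p => (p.1, VType.fa X.1 X.2 p.2)))) := by
  have hwrap {l : List (S × VType S)} (hl : l ≠ []) (hu : ∀ p ∈ l, VType.IsUnit p.2) :
      (VType.ssumL l).mapAtoms (VType.fa X.1 X.2) =
        VType.ssumL (l.map fun p => (p.1, VType.fa X.1 X.2 p.2)) :=
    VType.mapAtoms_ssumL _ hl fun p hp => (hu p hp).mapAtoms_eq _
  have hstrip {l : List (S × VType S)} (hl : l ≠ []) :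
      (VType.ssumL (l.map fun p => (p.1, VType.fa X.1 X.2 p.2))).mapAtoms (VType.stripFa X) =
        VType.ssumL l := by
    rw [VType.mapAtoms_ssumL _ (by simpa using hl) fun p hp => by
      obtain ⟨q, -, rfl⟩ := List.mem_map.1 hp
      rfl]
    simp [Function.comp_def]
  constructor
  · intro h
    simpa only [hwrap h₁ hu₁, hwrap h₂ hu₂] using h.mapAtoms_fa X
  · intro h
    simpa only [hstrip h₁, hstrip h₂] using h.mapAtoms_stripFa X
end

section
/- If Σ_{i=1}^n α_i·(∀X.U_i) ≡ Σ_{j=1}^m β_j·V_j, where U_i and V_j are unit types, then for every j there exists a unit type W_j such that V_j ≡ ∀X.W_j. -/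
/-!
Formalization of the vectorial λ-calculus (Arrighi, Díaz-Caro, Valiron):
syntax of types and terms, type equivalence, typing rules, reduction, etc.
-/

universe u

/-!
The axioms of `≡` only rearrange the additive and scalar skeleton of a type, and below a `∀`
they can only replace the body by an equivalent one. Hence the property "every leaf of the
skeleton is `∀X.W` with `W` equivalent to a unit type" is invariant under `≡`. The left-hand
side has it, so every `Vⱼ` has it; a unit type is its own only leaf, so `Vⱼ` is `∀X.W` with
`W ≡ W'` for a unit type `W'`, and then `Vⱼ ≡ ∀X.W'`.
-/

namespace VType

variable {S : Type u} [CommRing S]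

def ForallLeaves (X : Bool × ℕ) : VType S → Prop
  | smul _ T => ForallLeaves X T
  | add T R => ForallLeaves X T ∧ ForallLeaves X R
  | fa b n W => (b, n) = X ∧ ∃ U, IsUnit U ∧ TEq W U
  | _ => False

theorem forallLeaves_iff_of_teq {X : Bool × ℕ} {T R : VType S} (h : TEq T R) :
    ForallLeaves X T ↔ ForallLeaves X R := by
  induction h with
  | refl | oneSmul | smulSmul | arrowCong => simp only [ForallLeaves]
  | symm _ ih => exact ih.symm
  | trans _ _ ih₁ ih₂ => exact ih₁.trans ih₂
  | smulAdd => simp only [ForallLeaves]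
  | addSmul => simp only [ForallLeaves, and_self]
  | comm | assoc => simp only [ForallLeaves]; tauto
  | faCong b n h _ =>
      simp only [ForallLeaves]
      exact and_congr_right fun _ => exists_congr fun U =>
        and_congr_right fun _ => ⟨h.symm.trans, h.trans⟩
  | smulCong _ _ ih => exact ih
  | addCong _ _ ih₁ ih₂ => simp only [ForallLeaves]; rw [ih₁, ih₂]

theorem forallLeaves_ssumL {X : Bool × ℕ} :
    ∀ {l : List (S × VType S)}, l ≠ [] → (∀ p ∈ l, ForallLeaves X p.2) →
      ForallLeaves X (ssumL l)
  | [p], _, h => by simpa [ssumL, ForallLeaves] using h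
  | p :: q :: l, _, h => by
      simp only [List.mem_cons, forall_eq_or_imp] at h
      exact ⟨h.1, forallLeaves_ssumL (List.cons_ne_nil q l) (by simpa using h.2)⟩

theorem ForallLeaves.of_mem_ssumL {X : Bool × ℕ} :
    ∀ {l : List (S × VType S)}, ForallLeaves X (ssumL l) → ∀ p ∈ l, ForallLeaves X p.2
  | [], _ => by simp
  | [p], h => by simpa [ssumL, ForallLeaves] using h
  | p :: q :: l, h => by
      simp only [ssumL, ForallLeaves] at h
      simpa [h.1] using of_mem_ssumL h.2

theorem forallLeaves_fa {X : Bool × ℕ} {U : VType S} (hU : IsUnit U) :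
    ForallLeaves X (fa X.1 X.2 U) :=
  ⟨rfl, U, hU, TEq.refl U⟩

theorem IsUnit.exists_teq_fa {X : Bool × ℕ} {T : VType S} (hT : IsUnit T)
    (h : ForallLeaves X T) : ∃ W, IsUnit W ∧ TEq T (VType.fa X.1 X.2 W) := by
  cases hT with
  | uvar | arrow => exact h.elim
  | fa =>
      obtain ⟨rfl, W, hW, hTW⟩ := h
      exact ⟨W, hW, TEq.faCong _ _ hTW⟩

end VType

theorem equiv_forall_shape_general {S : Type} [CommRing S] (X : Bool × ℕ)
    (l₁ l₂ : List (S × VType S)) (h₁ : l₁ ≠ [])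
    (hu₁ : ∀ p ∈ l₁, VType.IsUnit p.2) (hu₂ : ∀ p ∈ l₂, VType.IsUnit p.2)
    (h : TEq (VType.ssumL (l₁.map (fun p => (p.1, VType.fa X.1 X.2 p.2))))
             (VType.ssumL l₂)) :
    ∀ p ∈ l₂, ∃ W : VType S, VType.IsUnit W ∧ TEq p.2 (VType.fa X.1 X.2 W) := by
  have hlhs :
      VType.ForallLeaves X (VType.ssumL (l₁.map fun p => (p.1, VType.fa X.1 X.2 p.2))) :=
    VType.forallLeaves_ssumL (by simpa using h₁) (by
      simp only [List.mem_map]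
      rintro _ ⟨p, hp, rfl⟩
      exact VType.forallLeaves_fa (hu₁ p hp))
  have hrhs := ((VType.forallLeaves_iff_of_teq h).mp hlhs).of_mem_ssumL
  exact fun p hp => (hu₂ p hp).exists_teq_fa (hrhs p hp)

/-- if Σᵢ αᵢ·∀X.Uᵢ ≡ Σⱼ βⱼ·Vⱼ then every Vⱼ is equivalent
to some ∀X.Wⱼ with Wⱼ a unit type. -/
theorem equiv_forall_shape {S : Type} [CommRing S] (X : Bool × ℕ)
    (l₁ l₂ : List (S × VType S)) (h₁ : l₁ ≠ []) (h₂ : l₂ ≠ [])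
    (hu₁ : ∀ p ∈ l₁, VType.IsUnit p.2) (hu₂ : ∀ p ∈ l₂, VType.IsUnit p.2)
    (h : TEq (VType.ssumL (l₁.map (fun p => (p.1, VType.fa X.1 X.2 p.2))))
             (VType.ssumL l₂)) :
    ∀ p ∈ l₂, ∃ W : VType S, VType.IsUnit W ∧ TEq p.2 (VType.fa X.1 X.2 W) :=
  equiv_forall_shape_general X l₁ l₂ h₁ hu₁ hu₂ h
end

section
/- Scalar generation lemma: if Γ ⊢ α·t : T is derivable in λ^vec, then there exists a type R such that T ≡ α·R and Γ ⊢ t : R is derivable. -/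
/-!
Formalization of the vectorial λ-calculus (Arrighi, Díaz-Caro, Valiron):
syntax of types and terms, type equivalence, typing rules, reduction, etc.
-/

universe u

/-!
Every type is equivalent to a linear combination of atoms (types that are neither sums nor
scalar multiples), and two such combinations are equivalent exactly when they have the same
coefficient on each class of head-equivalent atoms and the same set of classes occurring.
The lemma then follows by induction on the derivation; the only nontrivial rules are (∀_I) and
(∀_E), which transform each unit summand of a sum `Σ pᵢ·Uᵢ`. If the premise of such a rule is
equivalent to `α·R`, every atom of `R` is head-equivalent to one of its summands, so `R` can be
rewritten as a sum of the same unit types, the rule applied to that, and the result compared with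
the conclusion of the rule through the invariant.
-/

namespace VType

variable {S : Type u}

def IsAtom : VType S → Prop
  | smul _ _ => False
  | add _ _ => False
  | _ => True

theorem IsUnit.isAtom {U : VType S} (h : IsUnit U) : IsAtom U := by
  cases h <;> trivial

theorem IsUnit.substT {U : VType S} (h : IsUnit U) {v : Bool × ℕ}
    {A : VType S} (hk : kindOK v A) : IsUnit (substT U v A) := by
  induction h with
  | uvar n =>
    simp only [VType.substT]
    split
    · exact hk (by simp [*])
    · exact .uvar n
  | arrow _ ih => exact .arrow ih
  | fa hU ih =>
    simp only [VType.substT]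
    split
    · exact .fa hU
    · exact .fa ih

section

variable [Mul S] [One S]

def summands : VType S → List (S × VType S)
  | smul a T => (summands T).map (Prod.map (a * ·) id)
  | add T R => summands T ++ summands R
  | T => [(1, T)]

@[simp] theorem summands_smul (a : S) (T : VType S) :
    summands (smul a T) = (summands T).map (Prod.map (a * ·) id) := rfl

@[simp] theorem summands_add (T R : VType S) :
    summands (add T R) = summands T ++ summands R := rfl

theorem summands_of_isAtom {T : VType S} (h : IsAtom T) : summands T = [(1, T)] := by
  cases T <;> first | rfl | exact h.elim

theorem summands_ne_nil (T : VType S) : summands T ≠ [] := by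
  induction T <;> simp_all [summands]

end

end VType

open VType

section

variable {S : Type u} [CommRing S]

/-- A priori finer than `TEq` on atoms; that it is not (`AtomEq.of_teq`) gives the injectivity
of `∀` needed for (∀_E). -/
inductive AtomEq : VType S → VType S → Prop
  | refl (T : VType S) : AtomEq T T
  | arrow {U V T R : VType S} : TEq U V → TEq T R → AtomEq (arrow U T) (arrow V R)
  | fa (b : Bool) (n : ℕ) {T R : VType S} : TEq T R → AtomEq (fa b n T) (fa b n R)

namespace AtomEq

theorem teq {T R : VType S} : AtomEq T R → TEq T R
  | refl _ => TEq.refl _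
  | arrow h₁ h₂ => TEq.arrowCong h₁ h₂
  | fa b n h => TEq.faCong b n h

theorem symm {T R : VType S} : AtomEq T R → AtomEq R T
  | refl _ => refl _
  | arrow h₁ h₂ => arrow h₁.symm h₂.symm
  | fa b n h => fa b n h.symm

theorem trans {T R Q : VType S} : AtomEq T R → AtomEq R Q → AtomEq T Q
  | refl _, h => h
  | h, refl _ => h
  | arrow h₁ h₂, arrow h₃ h₄ => arrow (h₁.trans h₃) (h₂.trans h₄)
  | fa b n h₁, fa _ _ h₂ => fa b n (h₁.trans h₂)

theorem teq_of_fa {b : Bool} {n : ℕ} {T R : VType S} :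
    AtomEq (VType.fa b n T) (VType.fa b n R) → TEq T R
  | refl _ => TEq.refl _
  | fa _ _ h => h

end AtomEq

variable (S) in
def atomSetoid : Setoid (VType S) := ⟨AtomEq, ⟨AtomEq.refl, AtomEq.symm, AtomEq.trans⟩⟩

variable (S) in
def AtomClass : Type u := Quotient (atomSetoid S)

def AtomClass.mk (T : VType S) : AtomClass S := Quotient.mk (atomSetoid S) T

theorem AtomClass.mk_eq_mk {T R : VType S} : AtomClass.mk T = AtomClass.mk R ↔ AtomEq T R :=
  Quotient.eq (r := atomSetoid S)

open AtomClass

open scoped Classical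

noncomputable def coeffs (l : List (S × VType S)) : AtomClass S →₀ S :=
  (l.map fun p => Finsupp.single (mk p.2) p.1).sum

/-- Classes occurring with coefficient zero count too: `T` and `T + 0 · R` are not equivalent. -/
def classes (l : List (S × VType S)) : Set (AtomClass S) := {j | ∃ p ∈ l, mk p.2 = j}

@[simp] theorem coeffs_nil : coeffs ([] : List (S × VType S)) = 0 := rfl

@[simp] theorem coeffs_cons (p : S × VType S) (l : List (S × VType S)) :
    coeffs (p :: l) = Finsupp.single (mk p.2) p.1 + coeffs l := by
  simp [coeffs]

@[simp] theorem coeffs_append (l₁ l₂ : List (S × VType S)) :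
    coeffs (l₁ ++ l₂) = coeffs l₁ + coeffs l₂ := by
  simp [coeffs]

@[simp] theorem coeffs_map_smul (a : S) (l : List (S × VType S)) :
    coeffs (l.map (Prod.map (a * ·) id)) = a • coeffs l := by
  induction l <;> simp_all [Finsupp.smul_single]

@[simp] theorem classes_nil : classes ([] : List (S × VType S)) = ∅ := by
  simp [classes]

@[simp] theorem classes_cons (p : S × VType S) (l : List (S × VType S)) :
    classes (p :: l) = insert (mk p.2) (classes l) := by
  ext; simp [classes, eq_comm]

@[simp] theorem classes_append (l₁ l₂ : List (S × VType S)) :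
    classes (l₁ ++ l₂) = classes l₁ ∪ classes l₂ := by
  ext; simp [classes, or_and_right, exists_or]

@[simp] theorem classes_map_smul (a : S) (l : List (S × VType S)) :
    classes (l.map (Prod.map (a * ·) id)) = classes l := by
  ext j
  simp only [classes, List.mem_map, Set.mem_ofPred_eq]
  exact ⟨fun ⟨_, ⟨p, hp, rfl⟩, hj⟩ => ⟨p, hp, hj⟩, fun ⟨p, hp, hj⟩ => ⟨_, ⟨p, hp, rfl⟩, hj⟩⟩

def LinEquiv (l₁ l₂ : List (S × VType S)) : Prop :=
  coeffs l₁ = coeffs l₂ ∧ classes l₁ = classes l₂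

theorem LinEquiv.refl (l : List (S × VType S)) : LinEquiv l l := ⟨rfl, rfl⟩

theorem LinEquiv.symm {l₁ l₂ : List (S × VType S)} (h : LinEquiv l₁ l₂) : LinEquiv l₂ l₁ :=
  ⟨h.1.symm, h.2.symm⟩

theorem LinEquiv.trans {l₁ l₂ l₃ : List (S × VType S)} (h : LinEquiv l₁ l₂)
    (h' : LinEquiv l₂ l₃) : LinEquiv l₁ l₃ :=
  ⟨h.1.trans h'.1, h.2.trans h'.2⟩

theorem TEq.linEquiv_summands {T R : VType S} (h : TEq T R) :
    LinEquiv (summands T) (summands R) := by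
  induction h with
  | refl => exact .refl _
  | symm _ ih => exact ih.symm
  | trans _ _ ih₁ ih₂ => exact ih₁.trans ih₂
  | oneSmul =>
    simp only [LinEquiv, summands_smul, coeffs_map_smul, classes_map_smul, one_smul, and_self]
  | smulSmul =>
    simp only [LinEquiv, summands_smul, coeffs_map_smul, classes_map_smul, mul_smul, and_self]
  | smulAdd => exact ⟨by simp, by simp⟩
  | addSmul => exact ⟨by simp [add_smul], by simp⟩
  | comm => exact ⟨by simp [add_comm], by simp [Set.union_comm]⟩
  | assoc => exact ⟨by simp, by simp⟩
  | arrowCong h₁ h₂ =>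
    have := mk_eq_mk.2 (AtomEq.arrow h₁ h₂)
    exact ⟨by simp [summands, this], by simp [summands, this]⟩
  | faCong b n h =>
    have := mk_eq_mk.2 (AtomEq.fa b n h)
    exact ⟨by simp [summands, this], by simp [summands, this]⟩
  | smulCong a _ ih => exact ⟨by simp [ih.1], by simp [ih.2]⟩
  | addCong _ _ ih₁ ih₂ => exact ⟨by simp [ih₁.1, ih₂.1], by simp [ih₁.2, ih₂.2]⟩

theorem AtomEq.of_teq {T R : VType S} (hT : IsAtom T) (hR : IsAtom R) (h : TEq T R) :
    AtomEq T R := by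
  have h := h.linEquiv_summands.2
  simp only [summands_of_isAtom hT, summands_of_isAtom hR, classes_cons, classes_nil,
    insert_empty_eq, Set.singleton_eq_singleton_iff] at h
  exact mk_eq_mk.1 h

theorem VType.ssumL_cons (p : S × VType S) {l : List (S × VType S)} (h : l ≠ []) :
    ssumL (p :: l) = add (smul p.1 p.2) (ssumL l) := by
  cases l
  · exact absurd rfl h
  · rfl

theorem teq_ssumL_cons (p : S × VType S) {l₁ l₂ : List (S × VType S)} (h₁ : l₁ ≠ [])
    (h₂ : l₂ ≠ []) (h : TEq (ssumL l₁) (ssumL l₂)) :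
    TEq (ssumL (p :: l₁)) (ssumL (p :: l₂)) := by
  rw [ssumL_cons p h₁, ssumL_cons p h₂]
  exact TEq.addCong (TEq.refl _) h

theorem teq_ssumL_head (a : S) {U V : VType S} (l : List (S × VType S)) (h : TEq U V) :
    TEq (ssumL ((a, U) :: l)) (ssumL ((a, V) :: l)) := by
  cases l
  · exact TEq.smulCong a h
  · exact TEq.addCong (TEq.smulCong a h) (TEq.refl _)

theorem teq_ssumL_of_perm {l₁ l₂ : List (S × VType S)} (h : l₁.Perm l₂) :
    TEq (ssumL l₁) (ssumL l₂) := by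
  induction h with
  | nil => exact TEq.refl _
  | @cons p l₁ l₂ h ih =>
    rcases eq_or_ne l₁ [] with rfl | h₁
    · rw [List.nil_perm.1 h]
      exact TEq.refl _
    · exact teq_ssumL_cons p h₁ (fun h₂ => h₁ (h₂ ▸ h).eq_nil) ih
  | swap p q l =>
    cases l
    · exact TEq.comm _ _
    · exact (TEq.assoc _ _ _).trans
        ((TEq.addCong (TEq.comm _ _) (TEq.refl _)).trans (TEq.assoc _ _ _).symm)
  | trans _ _ ih₁ ih₂ => exact ih₁.trans ih₂

theorem teq_ssumL_append {l₁ l₂ : List (S × VType S)} (h₁ : l₁ ≠ []) (h₂ : l₂ ≠ []) :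
    TEq (ssumL (l₁ ++ l₂)) (add (ssumL l₁) (ssumL l₂)) := by
  induction l₁ with
  | nil => exact absurd rfl h₁
  | cons p l ih =>
    rcases eq_or_ne l [] with rfl | hl
    · rw [List.singleton_append, ssumL_cons p h₂]
      exact TEq.refl _
    · rw [List.cons_append, ssumL_cons p (by simp [hl]), ssumL_cons p hl]
      exact (TEq.addCong (TEq.refl _) (ih hl)).trans (TEq.assoc _ _ _)

theorem teq_smul_ssumL (a : S) {l : List (S × VType S)} (h : l ≠ []) :
    TEq (smul a (ssumL l)) (ssumL (l.map (Prod.map (a * ·) id))) := by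
  induction l with
  | nil => exact absurd rfl h
  | cons p l ih =>
    rcases eq_or_ne l [] with rfl | hl
    · exact TEq.smulSmul a p.1 p.2
    · rw [List.map_cons, ssumL_cons _ hl, ssumL_cons _ (by simp [hl])]
      exact (TEq.smulAdd _ _ _).symm.trans (TEq.addCong (TEq.smulSmul _ _ _) (ih hl))

theorem teq_ssumL_summands (T : VType S) : TEq T (ssumL (summands T)) := by
  induction T with
  | smul a T ih => exact (TEq.smulCong a ih).trans (teq_smul_ssumL a (summands_ne_nil T))
  | add T R ihT ihR =>
    exact (TEq.addCong ihT ihR).trans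
      (teq_ssumL_append (summands_ne_nil T) (summands_ne_nil R)).symm
  | _ => exact (TEq.oneSmul _).symm

theorem summands_ssumL {l : List (S × VType S)} (h : ∀ p ∈ l, IsAtom p.2) (hl : l ≠ []) :
    summands (ssumL l) = l := by
  induction l with
  | nil => exact absurd rfl hl
  | cons p l ih =>
    have hp : summands (smul p.1 p.2) = [p] := by
      simp [summands_of_isAtom (h p List.mem_cons_self)]
    rcases eq_or_ne l [] with rfl | hl
    · exact hp
    · rw [ssumL_cons p hl, summands_add, hp, ih (fun q hq => h q (List.mem_cons_of_mem p hq)) hl]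
      rfl

theorem teq_ssumL_map_snd {l : List (S × VType S)} {f : VType S → VType S}
    (hf : ∀ p ∈ l, TEq p.2 (f p.2)) (hl : l ≠ []) :
    TEq (ssumL l) (ssumL (l.map (Prod.map id f))) := by
  induction l with
  | nil => exact absurd rfl hl
  | cons p l ih =>
    have hp : TEq (smul p.1 p.2) (smul p.1 (f p.2)) := TEq.smulCong _ (hf p List.mem_cons_self)
    rcases eq_or_ne l [] with rfl | hl
    · exact hp
    · rw [List.map_cons, ssumL_cons _ hl, ssumL_cons _ (by simp [hl])]
      exact TEq.addCong hp (ih (fun q hq => hf q (List.mem_cons_of_mem p hq)) hl)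

theorem teq_ssumL_collapse {P : List (S × VType S)} (R : List (S × VType S)) {b : VType S}
    (hP : P ≠ []) (hb : ∀ p ∈ P, AtomEq p.2 b) :
    TEq (ssumL (P ++ R)) (ssumL (((P.map Prod.fst).sum, b) :: R)) := by
  induction P with
  | nil => exact absurd rfl hP
  | cons p P ih =>
    have hp : TEq (ssumL (p :: (P ++ R))) (ssumL ((p.1, b) :: (P ++ R))) :=
      teq_ssumL_head p.1 _ (hb p List.mem_cons_self).teq
    rcases eq_or_ne P [] with rfl | hP
    · simpa using hp
    · refine hp.trans ((teq_ssumL_cons _ (by simp [hP]) (List.cons_ne_nil _ _)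
        (ih hP fun q hq => hb q (List.mem_cons_of_mem p hq))).trans ?_)
      rw [List.map_cons, List.sum_cons]
      rcases R with _ | ⟨q, R⟩
      · exact TEq.addSmul _ _ _
      · exact (TEq.assoc _ _ _).trans (TEq.addCong (TEq.addSmul _ _ _) (TEq.refl _))

theorem sum_fst_filter_eq (l : List (S × VType S)) (j : AtomClass S) :
    ((l.filter fun p => mk p.2 = j).map Prod.fst).sum = coeffs l j := by
  induction l with
  | nil => rfl
  | cons p l ih => by_cases h : mk p.2 = j <;> simp [h, ih]

theorem coeffs_filter_ne (l : List (S × VType S)) (j : AtomClass S) :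
    coeffs (l.filter fun p => mk p.2 ≠ j) = (coeffs l).erase j := by
  induction l with
  | nil => simp
  | cons p l ih =>
    simp only [decide_not] at ih
    by_cases h : mk p.2 = j
    · simp [h, ih, Finsupp.erase_add]
    · simp [h, ih, Finsupp.erase_add]

theorem classes_filter_ne (l : List (S × VType S)) (j : AtomClass S) :
    classes (l.filter fun p => mk p.2 ≠ j) = classes l \ {j} := by
  ext
  simp only [classes, List.mem_filter, decide_eq_true_eq, Set.mem_sdiff, Set.mem_ofPred_eq,
    Set.mem_singleton_iff]
  grind

theorem classes_eq_empty {l : List (S × VType S)} : classes l = ∅ ↔ l = [] := by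
  cases l
  · simp
  · simpa using (Set.insert_nonempty _ _).ne_empty

theorem teq_ssumL_gather {l : List (S × VType S)} {b : VType S} (hb : mk b ∈ classes l) :
    TEq (ssumL l) (ssumL ((coeffs l (mk b), b) :: l.filter fun p => mk p.2 ≠ mk b)) := by
  obtain ⟨q, hq, hqb⟩ := hb
  have hP : l.filter (fun p => mk p.2 = mk b) ≠ [] :=
    List.ne_nil_of_mem (List.mem_filter.2 ⟨hq, by simpa using hqb⟩)
  have hperm := List.filter_append_perm (fun p => decide (mk p.2 = mk b)) l
  simp only [ne_eq, decide_not]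
  refine (teq_ssumL_of_perm hperm.symm).trans ?_
  rw [← sum_fst_filter_eq]
  exact teq_ssumL_collapse _ hP fun p hp => mk_eq_mk.1 (by simpa using (List.mem_filter.1 hp).2)

theorem LinEquiv.teq_ssumL {l₁ l₂ : List (S × VType S)} (h : LinEquiv l₁ l₂) (h₁ : l₁ ≠ [])
    (h₂ : l₂ ≠ []) : TEq (ssumL l₁) (ssumL l₂) := by
  induction hn : l₁.length using Nat.strong_induction_on generalizing l₁ l₂ with
  | _ n ih =>
    obtain ⟨p, l, rfl⟩ := List.exists_cons_of_ne_nil h₁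
    have hp₁ : mk p.2 ∈ classes (p :: l) := by simp
    have hp₂ : mk p.2 ∈ classes l₂ := h.2 ▸ hp₁
    refine (teq_ssumL_gather hp₁).trans (TEq.symm ?_)
    refine h.1 ▸ (teq_ssumL_gather hp₂).trans (TEq.symm ?_)
    set r₁ := (p :: l).filter fun q => mk q.2 ≠ mk p.2
    set r₂ := l₂.filter fun q => mk q.2 ≠ mk p.2
    have hr : LinEquiv r₁ r₂ :=
      ⟨by simp only [r₁, r₂, coeffs_filter_ne, h.1], by simp only [r₁, r₂, classes_filter_ne, h.2]⟩
    by_cases hr₁ : r₁ = []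
    · have hr₂ : r₂ = [] := classes_eq_empty.1 (hr.2.symm.trans (classes_eq_empty.2 hr₁))
      rw [hr₁, hr₂]
      exact TEq.refl _
    · have hr₂ : r₂ ≠ [] := fun hr₂ =>
        hr₁ (classes_eq_empty.1 (hr.2.trans (classes_eq_empty.2 hr₂)))
      have hlen : r₁.length < n := by
        simpa [r₁, ← hn] using
          Nat.lt_succ_of_le (List.length_filter_le (fun q => mk q.2 ≠ mk p.2) l)
      exact teq_ssumL_cons _ hr₁ hr₂ (ih _ hlen hr hr₁ hr₂ rfl)

theorem TEq.substT {T R : VType S} (v : Bool × ℕ) (A : VType S) (h : TEq T R) :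
    TEq (substT T v A) (substT R v A) := by
  induction h with
  | refl => exact .refl _
  | symm _ ih => exact ih.symm
  | trans _ _ ih₁ ih₂ => exact ih₁.trans ih₂
  | oneSmul => exact .oneSmul _
  | smulSmul => exact .smulSmul _ _ _
  | smulAdd => exact .smulAdd _ _ _
  | addSmul => exact .addSmul _ _ _
  | comm => exact .comm _ _
  | assoc => exact .assoc _ _ _
  | arrowCong _ _ ih₁ ih₂ => exact .arrowCong ih₁ ih₂
  | faCong b n h ih =>
    simp only [VType.substT]
    split
    · exact .faCong b n h
    · exact .faCong b n ih
  | smulCong a _ ih => exact .smulCong a ih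
  | addCong _ _ ih₁ ih₂ => exact .addCong ih₁ ih₂


theorem coeffs_map_snd {l : List (S × VType S)} {f g : VType S → VType S}
    {H : AtomClass S → AtomClass S} (hH : ∀ p ∈ l, mk (g p.2) = H (mk (f p.2))) :
    coeffs (l.map (Prod.map id g)) = (coeffs (l.map (Prod.map id f))).mapDomain H := by
  induction l with
  | nil => simp
  | cons p l ih =>
    simp [Finsupp.mapDomain_add, hH p List.mem_cons_self,
      ih fun q hq => hH q (List.mem_cons_of_mem p hq)]

theorem classes_map_snd {l : List (S × VType S)} {f g : VType S → VType S}
    {H : AtomClass S → AtomClass S} (hH : ∀ p ∈ l, mk (g p.2) = H (mk (f p.2))) :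
    classes (l.map (Prod.map id g)) = H '' classes (l.map (Prod.map id f)) := by
  induction l with
  | nil => simp
  | cons p l ih =>
    simp [Set.image_insert_eq, hH p List.mem_cons_self,
      ih fun q hq => hH q (List.mem_cons_of_mem p hq)]

theorem LinEquiv.map_snd {l₁ l₂ : List (S × VType S)} {f g : VType S → VType S}
    (hfg : ∀ p ∈ l₁ ++ l₂, ∀ q ∈ l₁ ++ l₂, AtomEq (f p.2) (f q.2) → AtomEq (g p.2) (g q.2))
    (h : LinEquiv (l₁.map (Prod.map id f)) (l₂.map (Prod.map id f))) :
    LinEquiv (l₁.map (Prod.map id g)) (l₂.map (Prod.map id g)) := by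
  let H : AtomClass S → AtomClass S := fun j =>
    if hj : ∃ p ∈ l₁ ++ l₂, mk (f p.2) = j then mk (g hj.choose.2) else j
  have hH : ∀ p ∈ l₁ ++ l₂, mk (g p.2) = H (mk (f p.2)) := by
    intro p hp
    have hj : ∃ q ∈ l₁ ++ l₂, mk (f q.2) = mk (f p.2) := ⟨p, hp, rfl⟩
    simp only [H, dif_pos hj]
    exact mk_eq_mk.2 (hfg p hp _ hj.choose_spec.1 (mk_eq_mk.1 hj.choose_spec.2.symm))
  have hH₁ := fun p hp => hH p (List.mem_append_left l₂ hp)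
  have hH₂ := fun p hp => hH p (List.mem_append_right l₁ hp)
  exact ⟨by rw [coeffs_map_snd hH₁, coeffs_map_snd hH₂, h.1],
    by rw [classes_map_snd hH₁, classes_map_snd hH₂, h.2]⟩

theorem linEquiv_map_snd_of_atomEq {l : List (S × VType S)} {f : VType S → VType S}
    (hf : ∀ p ∈ l, AtomEq p.2 (f p.2)) : LinEquiv l (l.map (Prod.map id f)) := by
  have hH : ∀ p ∈ l, mk (f p.2) = id (mk (id p.2)) := fun p hp => (mk_eq_mk.2 (hf p hp)).symm
  constructor
  · simpa using (coeffs_map_snd hH).symm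
  · simpa using (classes_map_snd hH).symm

theorem exists_units_of_linEquiv {l : List (S × VType S)} {g : VType S → VType S} {α : S}
    {R : VType S} (hl : ∀ p ∈ l, IsUnit p.2)
    (h : LinEquiv (l.map (Prod.map id g)) ((summands R).map (Prod.map (α * ·) id))) :
    ∃ L : List (S × VType S), L ≠ [] ∧ (∀ p ∈ L, IsUnit p.2) ∧
      TEq R (ssumL (L.map (Prod.map id g))) ∧
      LinEquiv (l.map (Prod.map id g)) ((L.map (Prod.map (α * ·) id)).map (Prod.map id g)) := by
  have hpick : ∀ A : VType S, ∃ U, mk A ∈ classes (l.map (Prod.map id g)) →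
      IsUnit U ∧ AtomEq A (g U) := by
    intro A
    by_cases hA : mk A ∈ classes (l.map (Prod.map id g))
    · obtain ⟨_, hp, e⟩ := hA
      obtain ⟨q, hq, rfl⟩ := List.mem_map.1 hp
      exact ⟨q.2, fun _ => ⟨hl q hq, (mk_eq_mk.1 e).symm⟩⟩
    · exact ⟨A, fun h => absurd h hA⟩
  choose pick hpick using hpick
  have hmem : ∀ p ∈ summands R, mk p.2 ∈ classes (l.map (Prod.map id g)) := fun p hp => by
    rw [h.2, classes_map_smul]
    exact ⟨p, hp, rfl⟩
  refine ⟨(summands R).map (Prod.map id pick), by simp [summands_ne_nil], ?_, ?_, ?_⟩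
  · intro p hp
    obtain ⟨q, hq, rfl⟩ := List.mem_map.1 hp
    exact (hpick _ (hmem q hq)).1
  · rw [List.map_map, Prod.map_comp_map]
    exact (teq_ssumL_summands R).trans
      (teq_ssumL_map_snd (fun p hp => (hpick _ (hmem p hp)).2.teq) (summands_ne_nil R))
  · refine h.trans ?_
    convert linEquiv_map_snd_of_atomEq (f := g ∘ pick) fun p hp => ?_ using 1
    · simp only [List.map_map, Prod.map_comp_map, Function.id_comp, Function.comp_id]
    · obtain ⟨q, hq, rfl⟩ := List.mem_map.1 hp
      exact (hpick _ (hmem q hq)).2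

theorem exists_smul_of_unitwise_rule {Γ : Ctx S} {t : VTerm S} {g h : VType S → VType S}
    (hg : ∀ U, IsUnit U → IsAtom (g U))
    (hgh : ∀ U V, IsUnit U → IsUnit V → AtomEq (g U) (g V) → AtomEq (h U) (h V))
    (rule : ∀ (p : S × VType S) ps, (∀ w ∈ p :: ps, IsUnit w.2) →
      Typing Γ t (ssumL ((p :: ps).map (Prod.map id g))) →
      Typing Γ t (ssumL ((p :: ps).map (Prod.map id h))))
    {l : List (S × VType S)} (hl : l ≠ []) (hu : ∀ p ∈ l, IsUnit p.2) {α : S} {R : VType S}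
    (hR : TEq (ssumL (l.map (Prod.map id g))) (smul α R)) (ht : Typing Γ t R) :
    ∃ R', TEq (ssumL (l.map (Prod.map id h))) (smul α R') ∧ Typing Γ t R' := by
  have hatoms : ∀ p ∈ l.map (Prod.map id g), IsAtom p.2 := fun p hp => by
    obtain ⟨q, hq, rfl⟩ := List.mem_map.1 hp
    exact hg q.2 (hu q hq)
  have hlg := hR.linEquiv_summands
  rw [summands_ssumL hatoms (by simpa using hl), summands_smul] at hlg
  obtain ⟨L, hL, hLu, hRL, hlL⟩ := exists_units_of_linEquiv hu hlg
  obtain ⟨p, ps, rfl⟩ := List.exists_cons_of_ne_nil hL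
  refine ⟨_, ?_, rule p ps hLu (ht.equiv hRL)⟩
  refine TEq.trans ?_ (teq_smul_ssumL α (by simp)).symm
  refine LinEquiv.teq_ssumL ?_ (by simpa using hl) (by simp)
  have hunit : ∀ w ∈ l ++ (p :: ps).map (Prod.map (α * ·) id), VType.IsUnit w.2 := by
    simp only [List.mem_append, List.mem_map]
    rintro w (hw | ⟨w, hw, rfl⟩)
    exacts [hu w hw, hLu w hw]
  have hlh := hlL.map_snd (g := h) fun q hq r hr => hgh _ _ (hunit q hq) (hunit r hr)
  simpa only [List.map_map, Prod.map_comp_map, Function.id_comp, Function.comp_id] using hlh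

end

/-- Scalar generation lemma. -/
theorem scalars_generation {S : Type} [CommRing S] {Γ : Ctx S} {t : VTerm S}
    {T : VType S} (α : S) (h : Typing Γ (VTerm.smul α t) T) :
    ∃ R : VType S, TEq T (VType.smul α R) ∧ Typing Γ t R := by
  generalize hs : VTerm.smul α t = s at h
  induction h with
  | smulI a ht => cases hs; exact ⟨_, TEq.refl _, ht⟩
  | equiv _ hTR ih =>
    obtain ⟨R, hR, ht⟩ := ih hs
    exact ⟨R, hTR.symm.trans hR, ht⟩
  | faI v p ps hv hu _ ih =>
    obtain ⟨R, hR, ht⟩ := ih hs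
    exact exists_smul_of_unitwise_rule (g := id) (h := fa v.1 v.2) (fun _ hU => hU.isAtom)
      (fun _ _ _ _ e => AtomEq.fa _ _ e.teq)
      (fun q qs hq hty => Typing.faI v q qs hv hq (by simpa using hty))
      (List.cons_ne_nil p ps) hu (by simpa using hR) ht
  | faE v A p ps hk hu _ ih =>
    obtain ⟨R, hR, ht⟩ := ih hs
    exact exists_smul_of_unitwise_rule (g := fa v.1 v.2) (h := (substT · v A))
      (fun _ _ => trivial)
      (fun _ _ hU hV e => AtomEq.of_teq (hU.substT hk).isAtom (hV.substT hk).isAtom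
        (e.teq_of_fa.substT v A))
      (fun q qs hq hty => Typing.faE v A q qs hk hq hty) (List.cons_ne_nil p ps) hu hR ht
  | _ => cases hs
end
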